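/- Let M, K be symmetric positive definite real m×m matrices, β > 0, A = [[2βM, 0, -M], [0, M, K], [-M, K, 0]], P = [[0, K, 0], [0, M, K], [-M, K, 0]]. If z is a nonzero vector with (2βI + K^{-1}MK^{-1}M)z = λz, then v = (−M^{-1}KM^{-1}Kz; −M^{-1}Kz; z) satisfies A v = λ P v. -/

import Mathlib

/-!
Write `v = (x, y, z)` with `y = -M⁻¹Kz` and `x = M⁻¹Ky`. Then `Mx = Ky` and `My = -Kz`, so the
second and third block rows of `A v` and `P v` vanish. In the first row one needs
`2βMx - Mz = λKy`, i.e. `Mz = (λ - 2β) KM⁻¹Kz`, which is the eigen-equation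
`(2β + K⁻¹MK⁻¹M) z = λz` multiplied on the left by `KM⁻¹K`.
-/

open Matrix

/-- A 3×3 block matrix with square m×m blocks. -/
def blk3 {R : Type*} (m : ℕ)
    (A B C D E F G H I : Matrix (Fin m) (Fin m) R) :
    Matrix (Fin m ⊕ (Fin m ⊕ Fin m)) (Fin m ⊕ (Fin m ⊕ Fin m)) R :=
  Matrix.of <|
    Sum.elim (fun i => Sum.elim (A i) (Sum.elim (B i) (C i)))
      (Sum.elim (fun i => Sum.elim (D i) (Sum.elim (E i) (F i)))
        (fun i => Sum.elim (G i) (Sum.elim (H i) (I i))))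

/-- A block vector with three m-blocks. -/
def vec3 {R : Type*} {m : ℕ} (x y z : Fin m → R) : Fin m ⊕ (Fin m ⊕ Fin m) → R :=
  Sum.elim x (Sum.elim y z)

section Blocks

variable {R : Type*} {m : ℕ}

theorem blk3_mulVec_vec3 [NonUnitalNonAssocSemiring R]
    (A B C D E F G H I : Matrix (Fin m) (Fin m) R) (x y z : Fin m → R) :
    blk3 m A B C D E F G H I *ᵥ vec3 x y z =
      vec3 (A *ᵥ x + B *ᵥ y + C *ᵥ z) (D *ᵥ x + E *ᵥ y + F *ᵥ z)
        (G *ᵥ x + H *ᵥ y + I *ᵥ z) := by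
  funext i
  rcases i with i | i | i <;>
    simp [blk3, vec3, mulVec, dotProduct, Fintype.sum_sum_type, add_assoc]

theorem smul_vec3 {S : Type*} [SMul S R] (c : S) (x y z : Fin m → R) :
    c • vec3 x y z = vec3 (c • x) (c • y) (c • z) := by
  funext i
  rcases i with i | i | i <;> rfl

end Blocks

namespace Matrix

variable {n R : Type*} [Fintype n] [DecidableEq n] [CommRing R]

theorem mulVec_nonsing_inv_mulVec {A : Matrix n n R} (h : IsUnit A.det) (w : n → R) :
    A *ᵥ (A⁻¹ *ᵥ w) = w := by
  rw [mulVec_mulVec, mul_nonsing_inv A h, one_mulVec]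

theorem nonsing_inv_mulVec_mulVec {A : Matrix n n R} (h : IsUnit A.det) (w : n → R) :
    A⁻¹ *ᵥ (A *ᵥ w) = w := by
  rw [mulVec_mulVec, nonsing_inv_mul A h, one_mulVec]

end Matrix

variable {R : Type*} [CommRing R] {m : ℕ} {M K : Matrix (Fin m) (Fin m) R}

theorem mulVec_eq_sub_smul_of_mulVec_eq_smul (hM : IsUnit M.det) (hK : IsUnit K.det) {c lam : R}
    {z : Fin m → R}
    (heig : (c • (1 : Matrix (Fin m) (Fin m) R) + K⁻¹ * M * K⁻¹ * M) *ᵥ z = lam • z) :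
    M *ᵥ z = (lam - c) • (K *ᵥ (M⁻¹ *ᵥ (K *ᵥ z))) := by
  have h : K⁻¹ *ᵥ (M *ᵥ (K⁻¹ *ᵥ (M *ᵥ z))) = (lam - c) • z := by
    simp only [add_mulVec, smul_mulVec, one_mulVec, ← mulVec_mulVec] at heig
    rw [sub_smul, ← heig, add_sub_cancel_left]
  rw [← mulVec_smul, ← mulVec_smul, ← mulVec_smul, ← h, mulVec_nonsing_inv_mulVec hK,
    nonsing_inv_mulVec_mulVec hM, mulVec_nonsing_inv_mulVec hK]

theorem blk3_mulVec_eq_smul_blk3_mulVec (hM : IsUnit M.det) (hK : IsUnit K.det) {c lam : R}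
    {z : Fin m → R}
    (heig : (c • (1 : Matrix (Fin m) (Fin m) R) + K⁻¹ * M * K⁻¹ * M) *ᵥ z = lam • z) :
    blk3 m (c • M) 0 (-M) 0 M K (-M) K 0 *ᵥ
        vec3 (-(M⁻¹ *ᵥ (K *ᵥ (M⁻¹ *ᵥ (K *ᵥ z))))) (-(M⁻¹ *ᵥ (K *ᵥ z))) z =
      lam • (blk3 m 0 K 0 0 M K (-M) K 0 *ᵥ
        vec3 (-(M⁻¹ *ᵥ (K *ᵥ (M⁻¹ *ᵥ (K *ᵥ z))))) (-(M⁻¹ *ᵥ (K *ᵥ z))) z) := by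
  have hMz := mulVec_eq_sub_smul_of_mulVec_eq_smul hM hK heig
  simp only [blk3_mulVec_vec3, _root_.smul_vec3, zero_mulVec, add_zero, zero_add, neg_mulVec,
    mulVec_neg, smul_mulVec, mulVec_nonsing_inv_mulVec hM, neg_zero, neg_add_cancel, smul_zero]
  rw [hMz]
  congr 1
  module

theorem stmt_14_general {m : ℕ} (M K : Matrix (Fin m) (Fin m) ℝ)
    (hM : M.PosDef) (hK : K.PosDef) (β : ℝ)
    (Mc : Matrix (Fin m) (Fin m) ℂ) (hMc : Mc = M.map Complex.ofReal)
    (Kc : Matrix (Fin m) (Fin m) ℂ) (hKc : Kc = K.map Complex.ofReal)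
    (A P : Matrix (Fin m ⊕ (Fin m ⊕ Fin m)) (Fin m ⊕ (Fin m ⊕ Fin m)) ℂ)
    (hA : A = blk3 m ((2 * (β : ℂ)) • Mc) 0 (-Mc) 0 Mc Kc (-Mc) Kc 0)
    (hP : P = blk3 m 0 Kc 0 0 Mc Kc (-Mc) Kc 0)
    (lam : ℂ) (z : Fin m → ℂ)
    (heig : ((2 * (β : ℂ)) • (1 : Matrix (Fin m) (Fin m) ℂ)
        + Kc⁻¹ * Mc * Kc⁻¹ * Mc) *ᵥ z = lam • z)
    (v : Fin m ⊕ (Fin m ⊕ Fin m) → ℂ)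
    (hv : v = vec3 (-(Mc⁻¹ *ᵥ (Kc *ᵥ (Mc⁻¹ *ᵥ (Kc *ᵥ z)))))
        (-(Mc⁻¹ *ᵥ (Kc *ᵥ z))) z) :
    A *ᵥ v = lam • (P *ᵥ v) := by
  have isUnit_det_map {N : Matrix (Fin m) (Fin m) ℝ} (hN : N.PosDef) :
      IsUnit (N.map Complex.ofReal).det :=
    (isUnit_iff_isUnit_det _).1 (hN.isUnit.map Complex.ofRealHom.mapMatrix)
  subst hMc hKc hA hP hv
  exact blk3_mulVec_eq_smul_blk3_mulVec (isUnit_det_map hM) (isUnit_det_map hK) heig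

theorem stmt_14 {m : ℕ} (M K : Matrix (Fin m) (Fin m) ℝ)
    (hM : M.PosDef) (hK : K.PosDef) (β : ℝ) (hβ : 0 < β)
    (Mc : Matrix (Fin m) (Fin m) ℂ) (hMc : Mc = M.map Complex.ofReal)
    (Kc : Matrix (Fin m) (Fin m) ℂ) (hKc : Kc = K.map Complex.ofReal)
    (A P : Matrix (Fin m ⊕ (Fin m ⊕ Fin m)) (Fin m ⊕ (Fin m ⊕ Fin m)) ℂ)
    (hA : A = blk3 m ((2 * (β : ℂ)) • Mc) 0 (-Mc) 0 Mc Kc (-Mc) Kc 0)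
    (hP : P = blk3 m 0 Kc 0 0 Mc Kc (-Mc) Kc 0)
    (lam : ℂ) (z : Fin m → ℂ) (hz : z ≠ 0)
    (heig : ((2 * (β : ℂ)) • (1 : Matrix (Fin m) (Fin m) ℂ)
        + Kc⁻¹ * Mc * Kc⁻¹ * Mc) *ᵥ z = lam • z)
    (v : Fin m ⊕ (Fin m ⊕ Fin m) → ℂ)
    (hv : v = vec3 (-(Mc⁻¹ *ᵥ (Kc *ᵥ (Mc⁻¹ *ᵥ (Kc *ᵥ z)))))
        (-(Mc⁻¹ *ᵥ (Kc *ᵥ z))) z) :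
    A *ᵥ v = lam • (P *ᵥ v) :=
  stmt_14_general M K hM hK β Mc hMc Kc hKc A P hA hP lam z heig v hv
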